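/- arXiv:1912.03643 — 3 statements merged into one kernel-verified Lean document; each statement's English description precedes it below -/
import Mathlib

section
/- Let κ > 0, t₀ ≤ t real numbers. Let E : [t₀, t] → ℝ be nonnegative, differentiable with E > 0, and let g, h : [t₀, t] → ℝ be continuous and nonnegative. If (1/2)·E'(s) ≤ −κ·E(s) + (κ²·g(s) + e^{−κs}·h(s))·√(E(s)) for all s ∈ [t₀, t], then √(E(t)) ≤ e^{−κ(t−t₀)}·√(E(t₀)) + κ·(1 − e^{−κ(t−t₀)})·sup_{τ∈[t₀,t]} g(τ) + e^{−κt}·(t−t₀)·sup_{τ∈[t₀,t]} h(τ). -/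
open Real Set

/-! Since `d√E/ds = E'/(2√E)`, the differential inequality for `E` is a linear one for `√E`:
the weighted root `φ(s) = e^{κs} √(E s)` satisfies `φ' ≤ κ² e^{κs} g(s) + h(s)`.
Bounding `g, h` by their suprema `G, H` and comparing `φ` with the solution
`e^{κt₀} √(E t₀) + κ G (e^{κs} - e^{κt₀}) + H (s - t₀)` of the resulting equation gives the
estimate after multiplying by `e^{-κt}`. -/

theorem hasDerivAt_exp_const_mul (κ s : ℝ) :
    HasDerivAt (fun s => exp (κ * s)) (exp (κ * s) * κ) s := by
  simpa using ((hasDerivAt_id s).const_mul κ).exp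

theorem hasDerivAt_exp_mul_sqrt {E : ℝ → ℝ} {E' κ s : ℝ} (hE : HasDerivAt E E' s)
    (hpos : 0 < E s) :
    HasDerivAt (fun s => exp (κ * s) * √(E s))
      (exp (κ * s) * (κ * √(E s) + E' / (2 * √(E s)))) s :=
  ((hasDerivAt_exp_const_mul κ s).mul (hE.sqrt hpos.ne')).congr_deriv (by ring)

theorem mul_sqrt_add_div_two_sqrt_le {κ x y c : ℝ} (hx : 0 < x)
    (h : 1 / 2 * y ≤ -κ * x + c * √x) :
    κ * √x + y / (2 * √x) ≤ c := by
  have hsqrt : 0 < √x := sqrt_pos.2 hx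
  have hsq : √x * √x = x := mul_self_sqrt hx.le
  rw [← sub_nonneg]
  have hmul : (c - (κ * √x + y / (2 * √x))) * √x = -κ * x + c * √x - 1 / 2 * y := by
    field_simp
    linear_combination (-2 * κ) * hsq
  nlinarith

section Comparison

variable {κ t₀ t G H : ℝ} {E E' g h : ℝ → ℝ}

theorem exp_mul_sqrt_le_of_half_deriv_le (ht : t₀ ≤ t)
    (hE_pos : ∀ s ∈ Icc t₀ t, 0 < E s)
    (hE_deriv : ∀ s ∈ Icc t₀ t, HasDerivAt E (E' s) s)
    (hgG : ∀ s ∈ Icc t₀ t, g s ≤ G) (hhH : ∀ s ∈ Icc t₀ t, h s ≤ H)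
    (hineq : ∀ s ∈ Icc t₀ t,
      1 / 2 * E' s ≤ -κ * E s + (κ ^ 2 * g s + exp (-κ * s) * h s) * √(E s)) :
    exp (κ * t) * √(E t) ≤
      exp (κ * t₀) * √(E t₀) + κ * G * (exp (κ * t) - exp (κ * t₀)) + H * (t - t₀) := by
  have hφ : ∀ s ∈ Icc t₀ t, HasDerivAt (fun s => exp (κ * s) * √(E s))
      (exp (κ * s) * (κ * √(E s) + E' s / (2 * √(E s)))) s := fun s hs =>
    hasDerivAt_exp_mul_sqrt (hE_deriv s hs) (hE_pos s hs)
  have hB : ∀ s : ℝ, HasDerivAt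
      (fun s => exp (κ * t₀) * √(E t₀) + κ * G * (exp (κ * s) - exp (κ * t₀)) + H * (s - t₀))
      (κ ^ 2 * G * exp (κ * s) + H) s := fun s =>
    (((((hasDerivAt_exp_const_mul κ s).sub_const (exp (κ * t₀))).const_mul (κ * G)).const_add
      (exp (κ * t₀) * √(E t₀))).add
        (((hasDerivAt_id s).sub_const t₀).const_mul H)).congr_deriv (by ring)
  have hbound : ∀ s ∈ Icc t₀ t, exp (κ * s) * (κ * √(E s) + E' s / (2 * √(E s)))
      ≤ κ ^ 2 * G * exp (κ * s) + H := by
    intro s hs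
    have hexp_inv : exp (κ * s) * exp (-κ * s) = 1 := by rw [← exp_add]; simp
    calc exp (κ * s) * (κ * √(E s) + E' s / (2 * √(E s)))
        ≤ exp (κ * s) * (κ ^ 2 * g s + exp (-κ * s) * h s) :=
          mul_le_mul_of_nonneg_left
            (mul_sqrt_add_div_two_sqrt_le (hE_pos s hs) (hineq s hs)) (exp_pos _).le
      _ = κ ^ 2 * exp (κ * s) * g s + h s := by linear_combination h s * hexp_inv
      _ ≤ κ ^ 2 * exp (κ * s) * G + H := by gcongr; exacts [hgG s hs, hhH s hs]
      _ = κ ^ 2 * G * exp (κ * s) + H := by ring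
  exact image_le_of_deriv_right_le_deriv_boundary
    (fun s hs => (hφ s hs).continuousAt.continuousWithinAt)
    (fun s hs => (hφ s (Ico_subset_Icc_self hs)).hasDerivWithinAt)
    (le_of_eq (by ring)) (fun s _ => (hB s).continuousAt.continuousWithinAt)
    (fun s _ => (hB s).hasDerivWithinAt)
    (fun s hs => hbound s (Ico_subset_Icc_self hs)) ⟨ht, le_rfl⟩

theorem sqrt_le_of_half_deriv_le (ht : t₀ ≤ t)
    (hE_pos : ∀ s ∈ Icc t₀ t, 0 < E s)
    (hE_deriv : ∀ s ∈ Icc t₀ t, HasDerivAt E (E' s) s)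
    (hgG : ∀ s ∈ Icc t₀ t, g s ≤ G) (hhH : ∀ s ∈ Icc t₀ t, h s ≤ H)
    (hineq : ∀ s ∈ Icc t₀ t,
      1 / 2 * E' s ≤ -κ * E s + (κ ^ 2 * g s + exp (-κ * s) * h s) * √(E s)) :
    √(E t) ≤ exp (-κ * (t - t₀)) * √(E t₀) + κ * (1 - exp (-κ * (t - t₀))) * G
      + exp (-κ * t) * (t - t₀) * H := by
  have hexp_inv : exp (-κ * t) * exp (κ * t) = 1 := by rw [← exp_add]; simp
  have hexp_diff : exp (-κ * (t - t₀)) = exp (-κ * t) * exp (κ * t₀) := by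
    rw [← exp_add]; ring_nf
  calc √(E t) = exp (-κ * t) * (exp (κ * t) * √(E t)) := by
        rw [← mul_assoc, hexp_inv, one_mul]
    _ ≤ exp (-κ * t) * (exp (κ * t₀) * √(E t₀) + κ * G * (exp (κ * t) - exp (κ * t₀))
          + H * (t - t₀)) :=
        mul_le_mul_of_nonneg_left
          (exp_mul_sqrt_le_of_half_deriv_le ht hE_pos hE_deriv hgG hhH hineq) (exp_pos _).le
    _ = _ := by rw [hexp_diff]; linear_combination κ * G * hexp_inv

end Comparison

theorem combined_energy_estimate_general
    (κ t₀ t : ℝ) (ht : t₀ ≤ t)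
    (E E' g h : ℝ → ℝ)
    (hE_pos : ∀ s ∈ Icc t₀ t, 0 < E s)
    (hE_deriv : ∀ s ∈ Icc t₀ t, HasDerivAt E (E' s) s)
    (hg_cont : ContinuousOn g (Icc t₀ t))
    (hh_cont : ContinuousOn h (Icc t₀ t))
    (hineq : ∀ s ∈ Icc t₀ t,
      (1/2) * E' s ≤ -κ * E s + (κ ^ 2 * g s + Real.exp (-κ * s) * h s) * Real.sqrt (E s)) :
    Real.sqrt (E t) ≤ Real.exp (-κ * (t - t₀)) * Real.sqrt (E t₀)
      + κ * (1 - Real.exp (-κ * (t - t₀))) * sSup (g '' Icc t₀ t)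
      + Real.exp (-κ * t) * (t - t₀) * sSup (h '' Icc t₀ t) :=
  sqrt_le_of_half_deriv_le ht hE_pos hE_deriv
    (fun _ hs => le_csSup (isCompact_Icc.bddAbove_image hg_cont) (mem_image_of_mem g hs))
    (fun _ hs => le_csSup (isCompact_Icc.bddAbove_image hh_cont) (mem_image_of_mem h hs))
    hineq

/-- **Combined energy estimate (inequality (eq:Gronwall:5) in abstract form).**
If `E` is nonnegative, positive and differentiable on `[t₀, t]`, `g, h` are continuous and
nonnegative there, and `(1/2)·E'(s) ≤ −κ·E(s) + (κ²·g(s) + e^{−κs}·h(s))·√(E(s))` on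
`[t₀, t]`, then
`√(E(t)) ≤ e^{−κ(t−t₀)}·√(E(t₀)) + κ·(1 − e^{−κ(t−t₀)})·sup_{[t₀,t]} g
  + e^{−κt}·(t−t₀)·sup_{[t₀,t]} h`. -/
theorem combined_energy_estimate
    (κ t₀ t : ℝ) (hκ : 0 < κ) (ht : t₀ ≤ t)
    (E E' g h : ℝ → ℝ)
    (hE_pos : ∀ s ∈ Icc t₀ t, 0 < E s)
    (hE_deriv : ∀ s ∈ Icc t₀ t, HasDerivAt E (E' s) s)
    (hg_cont : ContinuousOn g (Icc t₀ t))
    (hg_nonneg : ∀ s ∈ Icc t₀ t, 0 ≤ g s)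
    (hh_cont : ContinuousOn h (Icc t₀ t))
    (hh_nonneg : ∀ s ∈ Icc t₀ t, 0 ≤ h s)
    (hineq : ∀ s ∈ Icc t₀ t,
      (1/2) * E' s ≤ -κ * E s + (κ ^ 2 * g s + Real.exp (-κ * s) * h s) * Real.sqrt (E s)) :
    Real.sqrt (E t) ≤ Real.exp (-κ * (t - t₀)) * Real.sqrt (E t₀)
      + κ * (1 - Real.exp (-κ * (t - t₀))) * sSup (g '' Icc t₀ t)
      + Real.exp (-κ * t) * (t - t₀) * sSup (h '' Icc t₀ t) :=
  combined_energy_estimate_general κ t₀ t ht E E' g h hE_pos hE_deriv hg_cont hh_cont hineq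
end

section
/- Let 0 < κ < 1 and C ≥ 0. Let e, f : [0,∞) → ℝ be nonnegative functions with f bounded and f(t)² ≤ e(t) for all t, and suppose that for all 0 ≤ t₀ ≤ t: √(e(t)) ≤ e^{−κ(t−t₀)}·√(e(t₀)) + κ·(1 − e^{−κ(t−t₀)})·sup_{τ∈[t₀,t]} f(τ) + C·e^{−κt}·(t − t₀). Then limsup_{t→∞} f(t) = 0 and lim_{t→∞} e(t) = 0. -/
/-!
Once `f ≤ b` on `[t₀, ∞)`, the estimate bounds `√(e t)` by `κ b` plus terms that decay
exponentially in `t`. Taking `b` just above `μ = limsup f` and using `f ≤ √e` gives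
`μ ≤ κ μ`, so `μ = 0` because `κ < 1`; the same bound then forces `√e → 0`.
-/

open Real Set Filter Topology

lemma tendsto_exp_neg_mul_sub_atTop {κ : ℝ} (hκ : 0 < κ) (t₀ : ℝ) :
    Tendsto (fun t => exp (-κ * (t - t₀))) atTop (𝓝 0) :=
  tendsto_exp_atBot.comp <|
    (tendsto_atTop_add_const_right _ (-t₀) tendsto_id).const_mul_atTop_of_neg (neg_lt_zero.2 hκ)

lemma tendsto_exp_neg_mul_mul_sub_atTop {κ : ℝ} (hκ : 0 < κ) (t₀ : ℝ) :
    Tendsto (fun t => exp (-κ * t) * (t - t₀)) atTop (𝓝 0) := by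
  have hlin : (fun t : ℝ => t ^ 1 - t₀ * t ^ 0) =o[atTop] fun t => exp (κ * t) :=
    (isLittleO_pow_exp_pos_mul_atTop 1 hκ).sub
      ((isLittleO_pow_exp_pos_mul_atTop 0 hκ).const_mul_left t₀)
  refine hlin.tendsto_div_nhds_zero.congr fun t => ?_
  rw [neg_mul, exp_neg]
  ring

lemma sqrt_le_add_mul_of_energy_estimate {κ C t₀ t b : ℝ} {e f : ℝ → ℝ} (hκ : 0 ≤ κ)
    (hb : 0 ≤ b) (ht : t₀ ≤ t) (hfb : ∀ τ ∈ Icc t₀ t, f τ ≤ b)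
    (hest : √(e t) ≤ exp (-κ * (t - t₀)) * √(e t₀)
      + κ * (1 - exp (-κ * (t - t₀))) * sSup (f '' Icc t₀ t)
      + C * exp (-κ * t) * (t - t₀)) :
    √(e t) ≤ exp (-κ * (t - t₀)) * √(e t₀) + C * exp (-κ * t) * (t - t₀) + κ * b := by
  have hsup : sSup (f '' Icc t₀ t) ≤ b :=
    csSup_le ((nonempty_Icc.2 ht).image f) (forall_mem_image.2 hfb)
  have hexp_le_one : exp (-κ * (t - t₀)) ≤ 1 :=
    exp_le_one_iff.2 (mul_nonpos_of_nonpos_of_nonneg (neg_nonpos.2 hκ) (sub_nonneg.2 ht))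
  have hdamp : κ * (1 - exp (-κ * (t - t₀))) ≤ κ :=
    mul_le_of_le_one_right hκ (sub_le_self _ (exp_pos _).le)
  have hmid : κ * (1 - exp (-κ * (t - t₀))) * sSup (f '' Icc t₀ t) ≤ κ * b :=
    calc κ * (1 - exp (-κ * (t - t₀))) * sSup (f '' Icc t₀ t)
        ≤ κ * (1 - exp (-κ * (t - t₀))) * b := by gcongr
      _ ≤ κ * b := mul_le_mul_of_nonneg_right hdamp hb
  linarith

lemma eventually_sqrt_le_of_energy_estimate {κ C b ε : ℝ} {e f : ℝ → ℝ} (hκ : 0 < κ)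
    (hest : ∀ t₀ t : ℝ, 0 ≤ t₀ → t₀ ≤ t →
      √(e t) ≤ exp (-κ * (t - t₀)) * √(e t₀)
        + κ * (1 - exp (-κ * (t - t₀))) * sSup (f '' Icc t₀ t)
        + C * exp (-κ * t) * (t - t₀))
    (hb : 0 ≤ b) (hfb : ∀ᶠ t in atTop, f t ≤ b) (hε : 0 < ε) :
    ∀ᶠ t in atTop, √(e t) ≤ κ * b + ε := by
  obtain ⟨t₁, ht₁⟩ := eventually_atTop.1 hfb
  set t₀ := max t₁ 0
  have hforcing : Tendsto
      (fun t => exp (-κ * (t - t₀)) * √(e t₀) + C * exp (-κ * t) * (t - t₀)) atTop (𝓝 0) := by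
    simpa [mul_assoc] using ((tendsto_exp_neg_mul_sub_atTop hκ t₀).mul_const (√(e t₀))).add
      ((tendsto_exp_neg_mul_mul_sub_atTop hκ t₀).const_mul C)
  filter_upwards [hforcing.eventually_le_const hε, eventually_ge_atTop t₀] with t hsmall ht
  have := sqrt_le_add_mul_of_energy_estimate hκ.le hb ht
    (fun τ hτ => ht₁ τ ((le_max_left _ _).trans hτ.1)) (hest t₀ t (le_max_right _ _) ht)
  linarith

theorem limsup_eq_zero_of_energy_estimate_general
    (κ C : ℝ) (hκ0 : 0 < κ) (hκ1 : κ < 1)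
    (e f : ℝ → ℝ)
    (he_nonneg : ∀ t ∈ Ici (0:ℝ), 0 ≤ e t)
    (hf_nonneg : ∀ t ∈ Ici (0:ℝ), 0 ≤ f t)
    (hf_bdd : ∃ M : ℝ, ∀ t ∈ Ici (0:ℝ), f t ≤ M)
    (hfe : ∀ t ∈ Ici (0:ℝ), f t ^ 2 ≤ e t)
    (hmain : ∀ t₀ t : ℝ, 0 ≤ t₀ → t₀ ≤ t →
      Real.sqrt (e t) ≤ Real.exp (-κ * (t - t₀)) * Real.sqrt (e t₀)
        + κ * (1 - Real.exp (-κ * (t - t₀))) * sSup (f '' Icc t₀ t)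
        + C * Real.exp (-κ * t) * (t - t₀)) :
    Filter.limsup f Filter.atTop = 0 ∧ Filter.Tendsto e Filter.atTop (nhds 0) := by
  obtain ⟨M, hM⟩ := hf_bdd
  have hf_ev_nonneg : ∀ᶠ t in atTop, 0 ≤ f t := (eventually_ge_atTop 0).mono hf_nonneg
  have hbdd : IsBoundedUnder (· ≤ ·) atTop f :=
    isBoundedUnder_of_eventually_le ((eventually_ge_atTop 0).mono hM)
  set μ := limsup f atTop
  have hμ_nonneg : 0 ≤ μ := le_limsup_of_frequently_le hf_ev_nonneg.frequently hbdd
  have hsqrt_le : ∀ ε > 0, ∀ᶠ t in atTop, √(e t) ≤ κ * μ + ε := by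
    intro ε hε
    have hlt := eventually_lt_of_limsup_lt (lt_add_of_pos_right μ (half_pos hε)) hbdd
    filter_upwards [eventually_sqrt_le_of_energy_estimate hκ0 hmain (by positivity)
      (hlt.mono fun _ => le_of_lt) (half_pos hε)] with t ht
    nlinarith
  have hf_le_sqrt : ∀ᶠ t in atTop, f t ≤ √(e t) :=
    (eventually_ge_atTop 0).mono fun t ht => (le_abs_self _).trans (abs_le_sqrt (hfe t ht))
  have hμ : μ = 0 := by
    have : μ ≤ κ * μ := le_of_forall_pos_le_add fun ε hε =>
      limsup_le_of_le (isCoboundedUnder_le_of_eventually_le _ hf_ev_nonneg)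
        (((hsqrt_le ε hε).and hf_le_sqrt).mono fun _ h => h.2.trans h.1)
    nlinarith
  have hsqrt : Tendsto (fun t => √(e t)) atTop (𝓝 0) :=
    tendsto_order.2 ⟨fun a ha => Eventually.of_forall fun t => ha.trans_le (sqrt_nonneg _),
      fun a ha => (hsqrt_le (a / 2) (half_pos ha)).mono fun t ht => by rw [hμ] at ht; linarith⟩
  refine ⟨hμ, ?_⟩
  simpa using (hsqrt.pow 2).congr'
    ((eventually_ge_atTop 0).mono fun t ht => sq_sqrt (he_nonneg t ht))

/-- **Abstract final step in the proof of the global-existence theorem.**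
Let `0 < κ < 1` and `C ≥ 0`. Let `e, f : [0,∞) → ℝ` be nonnegative, with `f` bounded and
`f(t)² ≤ e(t)`, and suppose that for all `0 ≤ t₀ ≤ t`,
`√(e(t)) ≤ e^{−κ(t−t₀)}·√(e(t₀)) + κ·(1 − e^{−κ(t−t₀)})·sup_{[t₀,t]} f + C·e^{−κt}·(t−t₀)`.
Then `limsup_{t→∞} f(t) = 0` and `lim_{t→∞} e(t) = 0`. -/
theorem limsup_eq_zero_of_energy_estimate
    (κ C : ℝ) (hκ0 : 0 < κ) (hκ1 : κ < 1) (hC : 0 ≤ C)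
    (e f : ℝ → ℝ)
    (he_nonneg : ∀ t ∈ Ici (0:ℝ), 0 ≤ e t)
    (hf_nonneg : ∀ t ∈ Ici (0:ℝ), 0 ≤ f t)
    (hf_bdd : ∃ M : ℝ, ∀ t ∈ Ici (0:ℝ), f t ≤ M)
    (hfe : ∀ t ∈ Ici (0:ℝ), f t ^ 2 ≤ e t)
    (hmain : ∀ t₀ t : ℝ, 0 ≤ t₀ → t₀ ≤ t →
      Real.sqrt (e t) ≤ Real.exp (-κ * (t - t₀)) * Real.sqrt (e t₀)
        + κ * (1 - Real.exp (-κ * (t - t₀))) * sSup (f '' Icc t₀ t)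
        + C * Real.exp (-κ * t) * (t - t₀)) :
    Filter.limsup f Filter.atTop = 0 ∧ Filter.Tendsto e Filter.atTop (nhds 0) :=
  limsup_eq_zero_of_energy_estimate_general κ C hκ0 hκ1 e f he_nonneg hf_nonneg hf_bdd hfe hmain
end

section
/- Let κ > 0 and t₀ ≤ t be real numbers. Let E : [t₀, t] → ℝ be nonnegative, differentiable with E > 0, and let g, h : [t₀, t] → ℝ be continuous and nonnegative. If (1/2)·E'(s) ≤ −κ·E(s) + (κ²·g(s) + h(s))·√(E(s)) for all s ∈ [t₀, t] (note: no factor e^{−κs} in front of h), then √(E(t)) ≤ e^{−κ(t−t₀)}·√(E(t₀)) + κ·(1 − e^{−κ(t−t₀)})·sup_{τ∈[t₀,t]} g(τ) + (1/κ)·(1 − e^{−κ(t−t₀)})·sup_{τ∈[t₀,t]} h(τ). -/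
open Real Set

/-- **Alternative energy estimate (without the exponential prefactor on the nonlinearity).**
If `E` is nonnegative, positive and differentiable on `[t₀, t]`, `g, h` are continuous and
nonnegative there, and `(1/2)·E'(s) ≤ −κ·E(s) + (κ²·g(s) + h(s))·√(E(s))` on `[t₀, t]`, then
`√(E(t)) ≤ e^{−κ(t−t₀)}·√(E(t₀)) + κ·(1 − e^{−κ(t−t₀)})·sup_{[t₀,t]} g
  + (1/κ)·(1 − e^{−κ(t−t₀)})·sup_{[t₀,t]} h`. -/
theorem alternative_energy_estimate
    (κ t₀ t : ℝ) (hκ : 0 < κ) (ht : t₀ ≤ t)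
    (E E' g h : ℝ → ℝ)
    (hE_pos : ∀ s ∈ Icc t₀ t, 0 < E s)
    (hE_deriv : ∀ s ∈ Icc t₀ t, HasDerivAt E (E' s) s)
    (hg_cont : ContinuousOn g (Icc t₀ t))
    (hg_nonneg : ∀ s ∈ Icc t₀ t, 0 ≤ g s)
    (hh_cont : ContinuousOn h (Icc t₀ t))
    (hh_nonneg : ∀ s ∈ Icc t₀ t, 0 ≤ h s)
    (hineq : ∀ s ∈ Icc t₀ t,
      (1/2) * E' s ≤ -κ * E s + (κ ^ 2 * g s + h s) * Real.sqrt (E s)) :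
    Real.sqrt (E t) ≤ Real.exp (-κ * (t - t₀)) * Real.sqrt (E t₀)
      + κ * (1 - Real.exp (-κ * (t - t₀))) * sSup (g '' Icc t₀ t)
      + (1/κ) * (1 - Real.exp (-κ * (t - t₀))) * sSup (h '' Icc t₀ t) := by
  set G := sSup (g '' Icc t₀ t) with hG
  set H := sSup (h '' Icc t₀ t) with hH
  have hgG : ∀ s ∈ Icc t₀ t, g s ≤ G := fun s hs =>
    le_csSup (isCompact_Icc.bddAbove_image hg_cont) (mem_image_of_mem _ hs)
  have hhH : ∀ s ∈ Icc t₀ t, h s ≤ H := fun s hs =>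
    le_csSup (isCompact_Icc.bddAbove_image hh_cont) (mem_image_of_mem _ hs)
  set F : ℝ → ℝ := fun s => Real.sqrt (E s) with hF
  set F' : ℝ → ℝ := fun s => E' s / (2 * Real.sqrt (E s)) with hF'
  have hFd : ∀ s ∈ Icc t₀ t, HasDerivAt F (F' s) s := by
    intro s hs
    have := (Real.hasDerivAt_sqrt (ne_of_gt (hE_pos s hs))).comp s (hE_deriv s hs)
    simpa [hF, hF', div_eq_inv_mul, mul_comm, Function.comp_def] using this
  have hFc : ContinuousOn F (Icc t₀ t) := fun s hs =>
    (hFd s hs).continuousAt.continuousWithinAt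
  have bound : ∀ s ∈ Ico t₀ t, F' s ≤ (-κ) * F s + (κ ^ 2 * G + H) := by
    intro s hs'
    have hs : s ∈ Icc t₀ t := Ico_subset_Icc_self hs'
    have hEs := hE_pos s hs
    have hsq : 0 < Real.sqrt (E s) := Real.sqrt_pos.mpr hEs
    have key := hineq s hs
    have hE_eq : E s = Real.sqrt (E s) * Real.sqrt (E s) :=
      (Real.mul_self_sqrt hEs.le).symm
    have step1 : F' s ≤ -κ * Real.sqrt (E s) + (κ ^ 2 * g s + h s) := by
      rw [hF', div_le_iff₀ (by positivity)]
      calc E' s = 2 * ((1/2) * E' s) := by ring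
        _ ≤ 2 * (-κ * E s + (κ ^ 2 * g s + h s) * Real.sqrt (E s)) := by linarith
        _ = (-κ * Real.sqrt (E s) + (κ ^ 2 * g s + h s)) * (2 * Real.sqrt (E s)) := by
            linear_combination (-2*κ) * hE_eq
    have hgs := hgG s hs
    have hhs := hhH s hs
    have : κ ^ 2 * g s + h s ≤ κ ^ 2 * G + H := by nlinarith
    simp only [hF]
    linarith
  have main := le_gronwallBound_of_liminf_deriv_right_le hFc
    (fun x hx r hr => ((hFd x (Ico_subset_Icc_self hx)).hasDerivWithinAt.liminf_right_slope_le hr))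
    (le_refl (F t₀)) bound t ⟨ht, le_refl t⟩
  have hKne : (-κ) ≠ 0 := neg_ne_zero.mpr hκ.ne'
  rw [gronwallBound_of_K_ne_0 hKne] at main
  simp only [hF] at main ⊢
  have : F t₀ * Real.exp (-κ * (t - t₀)) + (κ ^ 2 * G + H) / (-κ) * (Real.exp (-κ * (t - t₀)) - 1)
      = Real.exp (-κ * (t - t₀)) * Real.sqrt (E t₀)
        + κ * (1 - Real.exp (-κ * (t - t₀))) * G
        + (1/κ) * (1 - Real.exp (-κ * (t - t₀))) * H := by
    simp only [hF]
    field_simp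
    ring
  linarith [main, this.le, this.ge]
end
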